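/- Let f be a function on finite binary strings that is monotone (u a prefix of v implies f(u) a prefix of or equal to f(v)), strict (for every u there is an extension v of u with f(v) ≠ f(u)), and preserves length-wise adjacency (if |u| = |v| and |val(u) − val(v)| = 1 then |val(f(u)) − val(f(v))| ≤ 1 and |f(u)| = |f(v)|). Then the induced map on [0,1], sending the real represented by an infinite binary sequence s to the real represented by the limit of f on the prefixes of s, is well-defined: equivalent sequences have equivalent images. -/

import Mathlib

/-- Base-2 value of a binary string. -/
def valList : List (Fin 2) → ℕ :=
  List.foldl (fun n d => 2 * n + d.val) 0

/-- The length-`k` prefix of an infinite binary sequence, as a binary string. -/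
def pre (s : ℕ → Fin 2) (k : ℕ) : List (Fin 2) := (List.range k).map s

/-- The real number in `[0,1]` represented by an infinite binary sequence. -/
noncomputable def phi (s : ℕ → Fin 2) : ℝ := ∑' i : ℕ, ((s i : ℕ) : ℝ) / 2 ^ (i + 1)

/-!
Two sequences represent the same real iff the values of their length-`k` prefixes differ by at
most one for every `k`: indeed `phi s = (valList (pre s k) + phi (shifted s)) / 2 ^ k` and `phi`
takes values in `[0, 1]`. By monotonicity of `f`, the length-`m` prefix of the image of `s` is the
first `m` digits of `f (pre s K)` for all large `K`, and likewise for `t`. The strings `pre s K`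
and `pre t K` are equal or adjacent, hence their images under `f` are equal or adjacent of equal
length, and truncating equal-length strings to their first `m` digits preserves adjacency.
-/

lemma foldl_two_mul_add_eq (v : List (Fin 2)) (n : ℕ) :
    v.foldl (fun n d => 2 * n + d.val) n = n * 2 ^ v.length + valList v := by
  induction v generalizing n with
  | nil => simp [valList]
  | cons d v ih =>
    simp only [valList, List.foldl_cons, List.length_cons] at ih ⊢
    rw [ih, ih (2 * 0 + d.val)]
    ring

lemma valList_append (u v : List (Fin 2)) :
    valList (u ++ v) = valList u * 2 ^ v.length + valList v := by
  rw [valList, List.foldl_append, foldl_two_mul_add_eq]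
  rfl

lemma valList_append_singleton (u : List (Fin 2)) (d : Fin 2) :
    valList (u ++ [d]) = 2 * valList u + d.val := by
  simp [valList, mul_comm]

lemma valList_lt (u : List (Fin 2)) : valList u < 2 ^ u.length := by
  induction u using List.reverseRecOn with
  | nil => simp [valList]
  | append_singleton u d ih =>
    rw [valList_append_singleton, List.length_append, List.length_singleton, pow_succ]
    omega

lemma eq_of_length_eq_of_valList_eq {u v : List (Fin 2)} (hl : u.length = v.length)
    (huv : valList u = valList v) : u = v := by
  induction u using List.reverseRecOn generalizing v with
  | nil => exact (List.length_eq_zero_iff.mp hl.symm).symm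
  | append_singleton u a ih =>
    obtain ⟨w, b, rfl⟩ : ∃ w b, v = w ++ [b] := by
      rcases List.eq_nil_or_concat v with rfl | ⟨w, b, rfl⟩
      · simp at hl
      · exact ⟨w, b, List.concat_eq_append⟩
    simp only [List.length_append, List.length_singleton, Nat.add_right_cancel_iff] at hl
    rw [valList_append_singleton, valList_append_singleton] at huv
    have hab : a = b := Fin.ext (by omega)
    rw [ih hl (by omega), hab]

lemma valList_take_le_succ {A B : List (Fin 2)} (hl : A.length = B.length)
    (hAB : valList A ≤ valList B + 1) (m : ℕ) :
    valList (A.take m) ≤ valList (B.take m) + 1 := by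
  have hA := valList_append (A.take m) (A.drop m)
  have hB := valList_append (B.take m) (B.drop m)
  have hBd := valList_lt (B.drop m)
  rw [List.take_append_drop] at hA hB
  rw [List.length_drop] at hA hB hBd
  rw [← hl] at hB hBd
  refine Nat.le_of_mul_le_mul_right (c := 2 ^ (A.length - m)) ?_ (Nat.two_pow_pos _)
  nlinarith

lemma abs_valList_take_sub_le_one {A B : List (Fin 2)} (hl : A.length = B.length)
    (hAB : |(valList A : ℤ) - valList B| ≤ 1) (m : ℕ) :
    |(valList (A.take m) : ℤ) - valList (B.take m)| ≤ 1 := by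
  rw [abs_le] at hAB ⊢
  have h₁ := valList_take_le_succ hl (by omega) m
  have h₂ := valList_take_le_succ hl.symm (by omega) m
  omega

lemma length_pre (s : ℕ → Fin 2) (k : ℕ) : (pre s k).length = k := by simp [pre]

lemma pre_prefix_pre (s : ℕ → Fin 2) {a b : ℕ} (hab : a ≤ b) : pre s a <+: pre s b := by
  rw [pre, pre, ← Nat.min_eq_left hab, ← List.take_range, List.map_take]
  exact List.take_prefix _ _

lemma pre_succ (s : ℕ → Fin 2) (k : ℕ) : pre s (k + 1) = pre s k ++ [s k] := by
  simp [pre, List.range_succ]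

lemma pre_eq_take_of_prefix {s : ℕ → Fin 2} {m : ℕ} {L : List (Fin 2)} (h : pre s m <+: L) :
    pre s m = L.take m := by
  simpa [length_pre] using List.prefix_iff_eq_take.mp h

lemma digit_div_two_pow_le (d : Fin 2) (i : ℕ) : ((d : ℕ) : ℝ) / 2 ^ (i + 1) ≤ 1 / 2 / 2 ^ i := by
  have hd : ((d : ℕ) : ℝ) ≤ 1 := by exact_mod_cast Nat.le_of_lt_succ d.isLt
  rw [pow_succ', ← div_div]
  gcongr

lemma summable_phi (s : ℕ → Fin 2) : Summable fun i => ((s i : ℕ) : ℝ) / 2 ^ (i + 1) :=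
  (summable_geometric_two' 1).of_nonneg_of_le (fun _ => by positivity)
    fun i => digit_div_two_pow_le (s i) i

lemma phi_nonneg (s : ℕ → Fin 2) : 0 ≤ phi s := tsum_nonneg fun _ => by positivity

lemma phi_le_one (s : ℕ → Fin 2) : phi s ≤ 1 :=
  calc phi s ≤ ∑' i : ℕ, (1 : ℝ) / 2 / 2 ^ i :=
        (summable_phi s).tsum_le_tsum (fun i => digit_div_two_pow_le (s i) i)
          (summable_geometric_two' 1)
    _ = 1 := tsum_geometric_two' 1

lemma abs_phi_sub_phi_le_one (s t : ℕ → Fin 2) : |phi s - phi t| ≤ 1 :=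
  abs_sub_le_iff.mpr
    ⟨by linarith [phi_nonneg t, phi_le_one s], by linarith [phi_nonneg s, phi_le_one t]⟩

lemma sum_range_eq_valList_pre_div (s : ℕ → Fin 2) (k : ℕ) :
    ∑ i ∈ Finset.range k, ((s i : ℕ) : ℝ) / 2 ^ (i + 1) = valList (pre s k) / 2 ^ k := by
  induction k with
  | zero => simp [pre, valList]
  | succ k ih =>
    rw [Finset.sum_range_succ, ih, pre_succ, valList_append_singleton]
    push_cast
    field_simp
    ring

lemma phi_eq_valList_pre_add_phi_shift (s : ℕ → Fin 2) (k : ℕ) :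
    phi s = (valList (pre s k) + phi fun i => s (i + k)) / 2 ^ k := by
  rw [phi, ← (summable_phi s).sum_add_tsum_nat_add k, sum_range_eq_valList_pre_div, add_div, phi,
    ← tsum_div_const]
  congr 2 with i
  rw [add_right_comm, pow_add, div_div]

lemma abs_valList_pre_sub_le_one_of_phi_eq {s t : ℕ → Fin 2} (hst : phi s = phi t) (k : ℕ) :
    |(valList (pre s k) : ℤ) - valList (pre t k)| ≤ 1 := by
  have hs := phi_eq_valList_pre_add_phi_shift s k
  have ht := phi_eq_valList_pre_add_phi_shift t k
  rw [hs, ht, div_left_inj' (by positivity)] at hst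
  have hdiff : (valList (pre s k) : ℝ) - valList (pre t k) =
      (phi fun i => t (i + k)) - phi fun i => s (i + k) := by
    linarith
  have : |(valList (pre s k) : ℝ) - valList (pre t k)| ≤ 1 := hdiff ▸ abs_phi_sub_phi_le_one _ _
  exact_mod_cast this

lemma phi_eq_of_abs_valList_pre_sub_le_one {s t : ℕ → Fin 2}
    (H : ∀ k, |(valList (pre s k) : ℤ) - valList (pre t k)| ≤ 1) : phi s = phi t := by
  have hbound : ∀ k : ℕ, |phi s - phi t| ≤ 2 * (1 / 2) ^ k := by
    intro k
    have hk : |(valList (pre s k) : ℝ) - valList (pre t k)| ≤ 1 := by exact_mod_cast H k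
    calc |phi s - phi t|
        = |((valList (pre s k) : ℝ) - valList (pre t k)) +
            ((phi fun i => s (i + k)) - phi fun i => t (i + k))| / 2 ^ k := by
          rw [phi_eq_valList_pre_add_phi_shift s k, phi_eq_valList_pre_add_phi_shift t k, ← sub_div,
            abs_div, abs_of_pos (by positivity : (0 : ℝ) < 2 ^ k)]
          congr 2
          ring
      _ ≤ (1 + 1) / 2 ^ k := by
          gcongr
          exact (abs_add_le _ _).trans (add_le_add hk (abs_phi_sub_phi_le_one _ _))
      _ = 2 * (1 / 2) ^ k := by rw [one_div_pow]; ring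
  have hlim : Filter.Tendsto (fun k : ℕ => 2 * (1 / 2 : ℝ) ^ k) Filter.atTop (nhds 0) := by
    simpa using (tendsto_pow_atTop_nhds_zero_of_lt_one (by norm_num : (0 : ℝ) ≤ 1 / 2)
      (by norm_num)).const_mul 2
  exact sub_eq_zero.mp (abs_nonpos_iff.mp (ge_of_tendsto' hlim hbound))

lemma phi_eq_phi_iff {s t : ℕ → Fin 2} :
    phi s = phi t ↔ ∀ k, |(valList (pre s k) : ℤ) - valList (pre t k)| ≤ 1 :=
  ⟨abs_valList_pre_sub_le_one_of_phi_eq, phi_eq_of_abs_valList_pre_sub_le_one⟩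

lemma abs_valList_take_image_sub_le_one {f : List (Fin 2) → List (Fin 2)}
    (hadj : ∀ u v : List (Fin 2), u.length = v.length →
      |(valList u : ℤ) - (valList v : ℤ)| = 1 →
      |(valList (f u) : ℤ) - (valList (f v) : ℤ)| ≤ 1 ∧ (f u).length = (f v).length)
    {u v : List (Fin 2)} (hl : u.length = v.length)
    (huv : |(valList u : ℤ) - valList v| ≤ 1) (m : ℕ) :
    |(valList ((f u).take m) : ℤ) - valList ((f v).take m)| ≤ 1 := by
  by_cases heq : valList u = valList v
  · rw [eq_of_length_eq_of_valList_eq hl heq, sub_self, abs_zero]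
    exact zero_le_one
  · have hone : |(valList u : ℤ) - valList v| = 1 := by
      rw [abs_le] at huv
      rw [abs_eq zero_le_one]
      omega
    obtain ⟨hfuv, hfl⟩ := hadj u v hl hone
    exact abs_valList_take_sub_le_one hfl hfuv m

theorem stmt_12_general (f : List (Fin 2) → List (Fin 2))
    (hmono : ∀ u v : List (Fin 2), u <+: v → f u <+: f v)
    (hadj : ∀ u v : List (Fin 2), u.length = v.length →
      |(valList u : ℤ) - (valList v : ℤ)| = 1 →
      |(valList (f u) : ℤ) - (valList (f v) : ℤ)| ≤ 1 ∧ (f u).length = (f v).length)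
    (s t g h : ℕ → Fin 2)
    (hst : phi s = phi t)
    (hg : ∀ m : ℕ, ∃ k : ℕ, pre g m <+: f (pre s k))
    (hh : ∀ m : ℕ, ∃ k : ℕ, pre h m <+: f (pre t k)) :
    phi g = phi h := by
  rw [phi_eq_phi_iff] at hst ⊢
  intro m
  obtain ⟨k₁, hk₁⟩ := hg m
  obtain ⟨k₂, hk₂⟩ := hh m
  rw [pre_eq_take_of_prefix (hk₁.trans (hmono _ _ (pre_prefix_pre s (le_max_left k₁ k₂)))),
    pre_eq_take_of_prefix (hk₂.trans (hmono _ _ (pre_prefix_pre t (le_max_right k₁ k₂))))]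
  exact abs_valList_take_image_sub_le_one hadj (by rw [length_pre, length_pre]) (hst (max k₁ k₂)) m

/-- Let `f` be a function on finite binary strings that is monotone, strict and
preserves length-wise adjacency. Then the induced map on `[0,1]` is well-defined:
if `s` and `t` represent the same real, and `g` (resp. `h`) is the induced infinite
image of `s` (resp. `t`) — i.e. every prefix of `g` is a prefix of some `f(s|k)` —
then `g` and `h` represent the same real. -/
theorem stmt_12 (f : List (Fin 2) → List (Fin 2))
    (hmono : ∀ u v : List (Fin 2), u <+: v → f u <+: f v)
    (hstrict : ∀ u : List (Fin 2), ∃ v : List (Fin 2), u <+: v ∧ f v ≠ f u)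
    (hadj : ∀ u v : List (Fin 2), u.length = v.length →
      |(valList u : ℤ) - (valList v : ℤ)| = 1 →
      |(valList (f u) : ℤ) - (valList (f v) : ℤ)| ≤ 1 ∧ (f u).length = (f v).length)
    (s t g h : ℕ → Fin 2)
    (hst : phi s = phi t)
    (hg : ∀ m : ℕ, ∃ k : ℕ, pre g m <+: f (pre s k))
    (hh : ∀ m : ℕ, ∃ k : ℕ, pre h m <+: f (pre t k)) :
    phi g = phi h :=
  stmt_12_general f hmono hadj s t g h hst hg hh
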